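/- arXiv:2410.19319 — 6 statements merged into one kernel-verified Lean document; each statement's English description precedes it below -/
import Mathlib

section
/- Let (a_n)_{n≥0}, (b_n)_{n≥0}, and (τ_n)_{n≥0} be sequences of real numbers and r a real number such that: a_k ≥ 0 and b_k ≥ 0 for all k, a_{k+1} ≤ r·a_k + b_k for all k, 0 < r < 1, and (τ_n) is nonincreasing with 0 ≤ τ_{k+1} ≤ τ_k ≤ 1 for all k ≥ 0. Then for every K ≥ 0, Σ_{k=0}^{K} τ_k·a_k ≤ (1/(1−r))·(τ_0·a_0 + Σ_{k=0}^{K} τ_k·b_k). -/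
/-!
Multiplying the recursion by the weights shows that `c k = τ k * a k` satisfies the same
recursion `c (k + 1) ≤ r * c k + d k` with `d k = τ k * b k`, because `τ (k + 1) ≤ τ k`.
Summing that recursion gives `S ≤ c 0 + r * S + D` for the partial sums `S` and `D`,
and solving for `S` gives the factor `1 / (1 - r)`.
-/

section

variable {α : Type*} [Field α] [LinearOrder α] [IsStrictOrderedRing α]

theorem sum_range_succ_le_of_succ_le_mul_add {c d : ℕ → α} {r : α}
    (hc : ∀ k, 0 ≤ c k) (hd : ∀ k, 0 ≤ d k) (hr0 : 0 ≤ r) (hr1 : r < 1)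
    (hrec : ∀ k, c (k + 1) ≤ r * c k + d k) (K : ℕ) :
    ∑ k ∈ Finset.range (K + 1), c k ≤
      1 / (1 - r) * (c 0 + ∑ k ∈ Finset.range (K + 1), d k) := by
  set S := ∑ k ∈ Finset.range (K + 1), c k
  set D := ∑ k ∈ Finset.range (K + 1), d k
  have hshift : ∑ k ∈ Finset.range K, c (k + 1) ≤
      r * ∑ k ∈ Finset.range K, c k + ∑ k ∈ Finset.range K, d k := by
    rw [Finset.mul_sum, ← Finset.sum_add_distrib]
    exact Finset.sum_le_sum fun k _ => hrec k
  have hS : S ≤ c 0 + r * S + D := calc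
    S = ∑ k ∈ Finset.range K, c (k + 1) + c 0 := Finset.sum_range_succ' c K
    _ ≤ r * ∑ k ∈ Finset.range K, c k + ∑ k ∈ Finset.range K, d k + c 0 := by gcongr
    _ ≤ r * S + D + c 0 := by
      gcongr
      · exact Finset.sum_le_sum_of_subset_of_nonneg (by simp) fun k _ _ => hc k
      · exact Finset.sum_le_sum_of_subset_of_nonneg (by simp) fun k _ _ => hd k
    _ = c 0 + r * S + D := by ring
  rw [one_div_mul_eq_div, le_div_iff₀ (sub_pos.mpr hr1)]
  linarith

theorem mul_le_mul_add_mul_of_le_mul_add {τ τ' a a' b r : α}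
    (hτ' : 0 ≤ τ') (hτ : τ' ≤ τ) (ha : 0 ≤ a) (hb : 0 ≤ b) (hr : 0 ≤ r)
    (hrec : a' ≤ r * a + b) :
    τ' * a' ≤ r * (τ * a) + τ * b := calc
  τ' * a' ≤ τ' * (r * a + b) := mul_le_mul_of_nonneg_left hrec hτ'
  _ = r * (τ' * a) + τ' * b := by ring
  _ ≤ r * (τ * a) + τ * b := by gcongr

end

theorem weighted_sum_recursion_bound_general (a b τ : ℕ → ℝ) (r : ℝ)
    (ha : ∀ k, 0 ≤ a k) (hb : ∀ k, 0 ≤ b k)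
    (hrec : ∀ k, a (k + 1) ≤ r * a k + b k)
    (hr0 : 0 < r) (hr1 : r < 1)
    (hτ0 : ∀ k, 0 ≤ τ k) (hτmono : ∀ k, τ (k + 1) ≤ τ k) :
    ∀ K, ∑ k ∈ Finset.range (K + 1), τ k * a k ≤
      (1 / (1 - r)) * (τ 0 * a 0 + ∑ k ∈ Finset.range (K + 1), τ k * b k) :=
  sum_range_succ_le_of_succ_le_mul_add (fun k => mul_nonneg (hτ0 k) (ha k))
    (fun k => mul_nonneg (hτ0 k) (hb k)) hr0.le hr1 fun k =>
    mul_le_mul_add_mul_of_le_mul_add (hτ0 _) (hτmono k) (ha k) (hb k) hr0.le (hrec k)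

theorem weighted_sum_recursion_bound (a b τ : ℕ → ℝ) (r : ℝ)
    (ha : ∀ k, 0 ≤ a k) (hb : ∀ k, 0 ≤ b k)
    (hrec : ∀ k, a (k + 1) ≤ r * a k + b k)
    (hr0 : 0 < r) (hr1 : r < 1)
    (hτ0 : ∀ k, 0 ≤ τ k) (hτmono : ∀ k, τ (k + 1) ≤ τ k) (hτ1 : ∀ k, τ k ≤ 1) :
    ∀ K, ∑ k ∈ Finset.range (K + 1), τ k * a k ≤
      (1 / (1 - r)) * (τ 0 * a 0 + ∑ k ∈ Finset.range (K + 1), τ k * b k) :=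
  weighted_sum_recursion_bound_general a b τ r ha hb hrec hr0 hr1 hτ0 hτmono
end

section
/- Suppose f : ℝ^d → ℝ is differentiable, μ-strongly convex, and ℓ-smooth, where 0 < μ ≤ ℓ. Let x* be the global minimizer of f. Then for any x ∈ ℝ^d and any step size γ with 0 < γ ≤ 2/(μ + ℓ), the gradient step x⁺ = x − γ·∇f(x) satisfies ‖x⁺ − x*‖ ≤ (1 − γμ)·‖x − x*‖. -/
set_option maxHeartbeats 1000000

variable {F : Type*} [NormedAddCommGroup F] [InnerProductSpace ℝ F] [CompleteSpace F]

lemma lineDeriv' (f : F → ℝ) (hdiff : Differentiable ℝ f) (a v : F) (t : ℝ) :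
    HasDerivAt (fun s : ℝ => f (a + s • v)) (inner ℝ (gradient f (a + t • v)) v : ℝ) t := by
  have h1 : HasDerivAt (fun s : ℝ => a + s • v) v t := by
    simpa using ((hasDerivAt_id t).smul_const v).const_add a
  have h2 := (hdiff (a + t • v)).hasGradientAt
  rw [hasGradientAt_iff_hasFDerivAt] at h2
  exact (h2.comp_hasDerivAt t h1).congr_deriv (by simp)

lemma psi_hasDeriv (f : F → ℝ) (hdiff : Differentiable ℝ f) (a v : F) (c : ℝ) (t : ℝ) :
    HasDerivAt (fun s : ℝ => f (a + s • v) - s * inner ℝ (gradient f a) v - c * ‖v‖ ^ 2 / 2 * s ^ 2)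
      ((inner ℝ (gradient f (a + t • v)) v : ℝ) - inner ℝ (gradient f a) v - c * ‖v‖ ^ 2 * t) t := by
  have h1 := lineDeriv' f hdiff a v t
  have h2 : HasDerivAt (fun s : ℝ => s * (inner ℝ (gradient f a) v : ℝ))
      (inner ℝ (gradient f a) v : ℝ) t := by simpa using (hasDerivAt_id t).mul_const _
  have h3 : HasDerivAt (fun s : ℝ => c * ‖v‖ ^ 2 / 2 * s ^ 2) (c * ‖v‖ ^ 2 * t) t := by
    have := (hasDerivAt_pow 2 t).const_mul (c * ‖v‖ ^ 2 / 2)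
    refine this.congr_deriv ?_
    ring
  exact (h1.sub h2).sub h3

/-- Descent lemma: upper quadratic bound from Lipschitz gradient. -/
lemma quad_upper (f : F → ℝ) (c : ℝ) (hc : 0 ≤ c) (hdiff : Differentiable ℝ f)
    (hL : ∀ a b : F, ‖gradient f a - gradient f b‖ ≤ c * ‖a - b‖) (a b : F) :
    f b ≤ f a + inner ℝ (gradient f a) (b - a) + c / 2 * ‖b - a‖ ^ 2 := by
  set v := b - a with hv
  set ψ : ℝ → ℝ := fun s => f (a + s • v) - s * inner ℝ (gradient f a) v - c * ‖v‖ ^ 2 / 2 * s ^ 2 with hψ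
  have hanti : AntitoneOn ψ (Set.Icc 0 1) := by
    apply antitoneOn_of_deriv_nonpos (convex_Icc 0 1)
    · exact Continuous.continuousOn (continuous_iff_continuousAt.2
        fun t => (psi_hasDeriv f hdiff a v c t).differentiableAt.continuousAt)
    · intro t ht
      exact (psi_hasDeriv f hdiff a v c t).differentiableAt.differentiableWithinAt
    · intro t ht
      rw [interior_Icc] at ht
      rw [(psi_hasDeriv f hdiff a v c t).deriv]
      have hb : (inner ℝ (gradient f (a + t • v)) v : ℝ) - inner ℝ (gradient f a) v
          ≤ c * ‖v‖ ^ 2 * t := by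
        have h1 : (inner ℝ (gradient f (a + t • v) - gradient f a) v : ℝ)
            ≤ ‖gradient f (a + t • v) - gradient f a‖ * ‖v‖ := real_inner_le_norm _ _
        have h2 : ‖gradient f (a + t • v) - gradient f a‖ ≤ c * (t * ‖v‖) := by
          have := hL (a + t • v) a
          simpa [norm_smul, abs_of_pos ht.1] using this
        have h3 : ‖gradient f (a + t • v) - gradient f a‖ * ‖v‖ ≤ c * (t * ‖v‖) * ‖v‖ :=
          mul_le_mul_of_nonneg_right h2 (norm_nonneg _)
        rw [inner_sub_left] at h1
        nlinarith [norm_nonneg v]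
      linarith
  have h01 := hanti (Set.mem_Icc.2 ⟨le_refl 0, zero_le_one⟩) (Set.mem_Icc.2 ⟨zero_le_one, le_refl 1⟩) zero_le_one
  simp only [hψ, zero_smul, add_zero, one_smul, zero_mul, one_mul] at h01
  have hab : a + v = b := by rw [hv]; abel
  rw [hab] at h01
  simp at h01 ⊢
  linarith

/-- Lower quadratic bound from strong monotonicity. -/
lemma quad_lower (f : F → ℝ) (m : ℝ) (hdiff : Differentiable ℝ f)
    (hmono : ∀ a b : F, m * ‖a - b‖ ^ 2 ≤ (inner ℝ (gradient f a - gradient f b) (a - b) : ℝ))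
    (a b : F) :
    f a + inner ℝ (gradient f a) (b - a) + m / 2 * ‖b - a‖ ^ 2 ≤ f b := by
  set v := b - a with hv
  set ψ : ℝ → ℝ := fun s => f (a + s • v) - s * inner ℝ (gradient f a) v - m * ‖v‖ ^ 2 / 2 * s ^ 2 with hψ
  have hmon : MonotoneOn ψ (Set.Icc 0 1) := by
    apply monotoneOn_of_deriv_nonneg (convex_Icc 0 1)
    · exact Continuous.continuousOn (continuous_iff_continuousAt.2
        fun t => (psi_hasDeriv f hdiff a v m t).differentiableAt.continuousAt)
    · intro t ht
      exact (psi_hasDeriv f hdiff a v m t).differentiableAt.differentiableWithinAt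
    · intro t ht
      rw [interior_Icc] at ht
      rw [(psi_hasDeriv f hdiff a v m t).deriv]
      have key := hmono (a + t • v) a
      have hsimp : (a + t • v) - a = t • v := by abel
      rw [hsimp, inner_smul_right, norm_smul] at key
      have ht0 : (0:ℝ) < t := ht.1
      rw [inner_sub_left] at key
      have : m * ‖v‖ ^ 2 * t ≤ (inner ℝ (gradient f (a + t • v)) v : ℝ) - inner ℝ (gradient f a) v := by
        have habs : ‖(t:ℝ)‖ = t := by rw [Real.norm_eq_abs, abs_of_pos ht0]
        rw [habs] at key
        nlinarith
      linarith
  have h01 := hmon (Set.mem_Icc.2 ⟨le_refl 0, zero_le_one⟩) (Set.mem_Icc.2 ⟨zero_le_one, le_refl 1⟩) zero_le_one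
  simp only [hψ, zero_smul, add_zero, one_smul, zero_mul, one_mul] at h01
  have hab : a + v = b := by rw [hv]; abel
  rw [hab] at h01
  simp at h01 ⊢
  linarith
/-- Abstract co-coercivity from upper and lower quadratic bounds. -/
lemma coco (φ : F → ℝ) (G : F → F) (c : ℝ) (hc : 0 < c)
    (UB : ∀ a b : F, φ b ≤ φ a + inner ℝ (G a) (b - a) + c / 2 * ‖b - a‖ ^ 2)
    (LB : ∀ a b : F, φ a + inner ℝ (G a) (b - a) ≤ φ b) (a b : F) :
    (1 / c) * ‖G a - G b‖ ^ 2 ≤ (inner ℝ (G a - G b) (a - b) : ℝ) := by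
  have key : ∀ p q : F, φ p + (inner ℝ (G p) (q - p) : ℝ) + 1 / (2 * c) * ‖G q - G p‖ ^ 2 ≤ φ q := by
    intro p q
    set g : F := G q - G p with hg
    set z : F := q - c⁻¹ • g with hz
    have h1 := UB q z
    have h2 := LB p z
    have hzq : z - q = -(c⁻¹ • g) := by rw [hz]; abel
    have hzp : z - p = (q - p) - c⁻¹ • g := by rw [hz]; abel
    have e1 : (inner ℝ (G q) (z - q) : ℝ) = -(c⁻¹ * inner ℝ (G q) g) := by
      rw [hzq, inner_neg_right, real_inner_smul_right]
    have e2 : ‖z - q‖ ^ 2 = c⁻¹ ^ 2 * ‖g‖ ^ 2 := by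
      rw [hzq, norm_neg, norm_smul, mul_pow, Real.norm_eq_abs, sq_abs]
    have e3 : (inner ℝ (G p) (z - p) : ℝ) = inner ℝ (G p) (q - p) - c⁻¹ * inner ℝ (G p) g := by
      rw [hzp, inner_sub_right, real_inner_smul_right]
    have e4 : (inner ℝ (G q) g : ℝ) - inner ℝ (G p) g = ‖g‖ ^ 2 := by
      rw [← inner_sub_left, ← hg, real_inner_self_eq_norm_sq]
    rw [e1, e2] at h1
    rw [e3] at h2
    have e5 : c / 2 * (c⁻¹ ^ 2 * ‖g‖ ^ 2) = 1 / (2 * c) * ‖g‖ ^ 2 := by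
      field_simp
    have e6 : c⁻¹ * (inner ℝ (G q) g : ℝ) - c⁻¹ * (inner ℝ (G p) g : ℝ) = c⁻¹ * ‖g‖ ^ 2 := by
      rw [← mul_sub, e4]
    have e7 : c⁻¹ * ‖g‖ ^ 2 - 1 / (2 * c) * ‖g‖ ^ 2 = 1 / (2 * c) * ‖g‖ ^ 2 := by
      field_simp; ring
    linarith
  have hab := key a b
  have hba := key b a
  have e11 : (inner ℝ (G a) (b - a) : ℝ) = -inner ℝ (G a) (a - b) := by
    rw [← inner_neg_right]; congr 1; abel
  have e10 : ‖G b - G a‖ = ‖G a - G b‖ := norm_sub_rev _ _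
  rw [e10] at hab
  have e13 : (1:ℝ) / c = 2 * (1 / (2 * c)) := by field_simp
  rw [inner_sub_left, e13]
  linarith

theorem gradient_step_contraction (d : ℕ) (f : EuclideanSpace ℝ (Fin d) → ℝ)
    (μ ℓ : ℝ) (hμ : 0 < μ) (hμℓ : μ ≤ ℓ)
    (hdiff : Differentiable ℝ f)
    (hsc : ∀ a b : EuclideanSpace ℝ (Fin d),
      μ * ‖a - b‖ ^ 2 ≤ (inner ℝ (gradient f a - gradient f b) (a - b) : ℝ))
    (hsmooth : ∀ a b : EuclideanSpace ℝ (Fin d),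
      ‖gradient f a - gradient f b‖ ≤ ℓ * ‖a - b‖)
    (xstar : EuclideanSpace ℝ (Fin d)) (hmin : ∀ y, f xstar ≤ f y)
    (x : EuclideanSpace ℝ (Fin d)) (γ : ℝ) (hγ0 : 0 < γ) (hγ : γ ≤ 2 / (μ + ℓ)) :
    ‖(x - γ • gradient f x) - xstar‖ ≤ (1 - γ * μ) * ‖x - xstar‖ := by
  have hℓ0 : 0 < ℓ := lt_of_lt_of_le hμ hμℓ
  -- gradient vanishes at the minimizer
  have hlocmin : IsLocalMin f xstar := Filter.Eventually.of_forall hmin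
  have hfder : fderiv ℝ f xstar = 0 := hlocmin.fderiv_eq_zero
  have hgrad0 : gradient f xstar = 0 := by
    unfold gradient; rw [hfder]; simp
  -- quadratic bounds
  have A := quad_upper f ℓ hℓ0.le hdiff hsmooth
  have B := quad_lower f μ hdiff hsc
  -- the convex "residual" function and its gradient map
  set φ : EuclideanSpace ℝ (Fin d) → ℝ := fun z => f z - μ / 2 * ‖z‖ ^ 2 with hφ
  set G : EuclideanSpace ℝ (Fin d) → EuclideanSpace ℝ (Fin d) :=
    fun z => gradient f z - μ • z with hG
  have hid : ∀ a b : EuclideanSpace ℝ (Fin d),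
      ‖b‖ ^ 2 = ‖a‖ ^ 2 + 2 * inner ℝ a (b - a) + ‖b - a‖ ^ 2 := by
    intro a b
    have h := norm_add_sq_real a (b - a)
    have h2 : a + (b - a) = b := by abel
    rw [h2] at h
    linarith
  have hGinner : ∀ a b : EuclideanSpace ℝ (Fin d), (inner ℝ (G a) (b - a) : ℝ)
      = inner ℝ (gradient f a) (b - a) - μ * inner ℝ a (b - a) := by
    intro a b
    rw [hG]; simp only [inner_sub_left, real_inner_smul_left]
  have UB : ∀ a b : EuclideanSpace ℝ (Fin d),
      φ b ≤ φ a + inner ℝ (G a) (b - a) + (ℓ - μ) / 2 * ‖b - a‖ ^ 2 := by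
    intro a b
    rw [hφ, hGinner a b]
    simp only
    nlinarith [A a b, hid a b]
  have LB : ∀ a b : EuclideanSpace ℝ (Fin d), φ a + inner ℝ (G a) (b - a) ≤ φ b := by
    intro a b
    rw [hφ, hGinner a b]
    simp only
    nlinarith [B a b, hid a b]
  -- the key vectors
  set y : EuclideanSpace ℝ (Fin d) := x - xstar with hy
  set g : EuclideanSpace ℝ (Fin d) := gradient f x with hgdef
  set P : EuclideanSpace ℝ (Fin d) := g - μ • y with hPdef
  have hGx : G x - G xstar = P := by
    rw [hG, hPdef, hy, hgdef]
    simp only [smul_sub, hgrad0]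
    abel
  clear_value y g P
  have hμℓγ : γ * (μ + ℓ) ≤ 2 := by
    rw [le_div_iff₀ (by linarith : (0:ℝ) < μ + ℓ)] at hγ
    exact hγ
  have hγμ1 : γ * μ ≤ 1 := by nlinarith
  -- key inequality: γ‖P‖² ≤ 2(1-γμ)⟨P,y⟩
  have key2 : γ * ‖P‖ ^ 2 ≤ 2 * (1 - γ * μ) * (inner ℝ P y : ℝ) := by
    rcases eq_or_lt_of_le hμℓ with heq | hlt
    · -- ℓ = μ: P = 0
      have hsc' := hsc x xstar
      have hsm' := hsmooth x xstar
      rw [hgrad0, sub_zero] at hsc' hsm'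
      rw [← hy, ← hgdef] at hsc' hsm'
      have hPsq : ‖P‖ ^ 2 = ‖g‖ ^ 2 - 2 * (μ * inner ℝ g y) + μ ^ 2 * ‖y‖ ^ 2 := by
        rw [hPdef, norm_sub_sq_real, real_inner_smul_right, norm_smul,
          Real.norm_eq_abs, mul_pow, sq_abs]
        try ring
      have hgy : μ * ‖y‖ ^ 2 ≤ (inner ℝ g y : ℝ) := hsc'
      have hgn : ‖g‖ ≤ μ * ‖y‖ := by rw [heq]; exact hsm'
      have hP0 : ‖P‖ ^ 2 ≤ 0 := by nlinarith [norm_nonneg g, norm_nonneg y]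
      have hP0' : ‖P‖ = 0 := by nlinarith [norm_nonneg P, sq_nonneg ‖P‖]
      have hPz : P = 0 := norm_eq_zero.mp hP0'
      rw [hPz]; simp
    · -- μ < ℓ: use co-coercivity
      have hco := coco φ G (ℓ - μ) (by linarith) UB LB x xstar
      rw [hGx, ← hy] at hco
      have hPy0 : 0 ≤ (inner ℝ P y : ℝ) := by
        refine le_trans ?_ hco
        have h1 : (0:ℝ) ≤ 1 / (ℓ - μ) := le_of_lt (one_div_pos.mpr (by linarith))
        exact mul_nonneg h1 (sq_nonneg _)
      have hPsq : ‖P‖ ^ 2 ≤ (ℓ - μ) * (inner ℝ P y : ℝ) := by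
        have h1 : (0:ℝ) < ℓ - μ := by linarith
        rw [div_mul_eq_mul_div, one_mul, div_le_iff₀ h1] at hco
        linarith
      have hcoef : γ * (ℓ - μ) ≤ 2 * (1 - γ * μ) := by nlinarith
      calc γ * ‖P‖ ^ 2 ≤ γ * ((ℓ - μ) * inner ℝ P y) :=
            mul_le_mul_of_nonneg_left hPsq hγ0.le
        _ = γ * (ℓ - μ) * inner ℝ P y := by ring
        _ ≤ 2 * (1 - γ * μ) * inner ℝ P y := mul_le_mul_of_nonneg_right hcoef hPy0
  -- expand the norm
  have hstep : (x - γ • g) - xstar = (1 - γ * μ) • y - γ • P := by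
    rw [hPdef, hy]
    simp only [smul_sub, sub_smul, one_smul, smul_smul]
    abel
  have hexp : ‖(x - γ • g) - xstar‖ ^ 2
      = (1 - γ * μ) ^ 2 * ‖y‖ ^ 2 - 2 * ((1 - γ * μ) * γ) * (inner ℝ y P : ℝ)
        + γ ^ 2 * ‖P‖ ^ 2 := by
    rw [hstep, norm_sub_sq_real, real_inner_smul_left, real_inner_smul_right,
      norm_smul, norm_smul, mul_pow, mul_pow, Real.norm_eq_abs, Real.norm_eq_abs,
      sq_abs, sq_abs]
    ring
  have hyP : (inner ℝ y P : ℝ) = inner ℝ P y := real_inner_comm _ _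
  have hsq : ‖(x - γ • g) - xstar‖ ^ 2 ≤ ((1 - γ * μ) * ‖y‖) ^ 2 := by
    rw [hexp, hyP]
    nlinarith [key2]
  have h1 : 0 ≤ (1 - γ * μ) * ‖y‖ := mul_nonneg (by linarith) (norm_nonneg _)
  have h2 : 0 ≤ ‖(x - γ • g) - xstar‖ := norm_nonneg _
  nlinarith
end

section
/- Let g : ℝ^q → ℝ be differentiable and μ_g-strongly convex (μ_g > 0) with minimizer y*, so ∇g(y*) = 0. Let f : ℝ^q → ℝ be differentiable with ‖∇f(y)‖ ≤ ℓ_{f,0} for all y. Let α > 0 and let y_α ∈ ℝ^q satisfy the first-order optimality condition ∇f(y_α) + α·∇g(y_α) = 0 (e.g. y_α is the minimizer of f + α·g). Then ‖y_α − y*‖ ≤ ℓ_{f,0}/(μ_g·α). -/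
theorem penalized_minimizer_close_to_lower_level (q : ℕ)
    (f g : EuclideanSpace ℝ (Fin q) → ℝ) (μg ℓf0 α : ℝ)
    (hμ : 0 < μg) (hα : 0 < α)
    (hgdiff : Differentiable ℝ g)
    (hsc : ∀ a b : EuclideanSpace ℝ (Fin q),
      μg * ‖a - b‖ ^ 2 ≤ (inner ℝ (gradient g a - gradient g b) (a - b) : ℝ))
    (ystar : EuclideanSpace ℝ (Fin q)) (hystar : gradient g ystar = 0)
    (hfdiff : Differentiable ℝ f)
    (hfb : ∀ y, ‖gradient f y‖ ≤ ℓf0)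
    (yα : EuclideanSpace ℝ (Fin q))
    (hyα : gradient f yα + α • gradient g yα = 0) :
    ‖yα - ystar‖ ≤ ℓf0 / (μg * α) := by
  set d := yα - ystar with hd
  have hg : α • gradient g yα = - gradient f yα := by
    have := hyα; linear_combination (norm := module) this
  have key : μg * α * ‖d‖ ^ 2 ≤ ℓf0 * ‖d‖ := by
    have h1 := hsc yα ystar
    rw [hystar, sub_zero] at h1
    have h2 : α * (inner ℝ (gradient g yα) d : ℝ) ≥ α * (μg * ‖d‖^2) := by
      exact mul_le_mul_of_nonneg_left h1 hα.le
    have h3 : α * (inner ℝ (gradient g yα) d : ℝ)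
        = (inner ℝ (α • gradient g yα) d : ℝ) := by
      rw [real_inner_smul_left]
    rw [hg] at h3
    have h4 : (inner ℝ (-(gradient f yα)) d : ℝ) ≤ ℓf0 * ‖d‖ := by
      calc (inner ℝ (-(gradient f yα)) d : ℝ) ≤ ‖-(gradient f yα)‖ * ‖d‖ :=
            real_inner_le_norm _ _
        _ ≤ ℓf0 * ‖d‖ := by
            apply mul_le_mul_of_nonneg_right _ (norm_nonneg _)
            rw [norm_neg]; exact hfb yα
    nlinarith [h2, h3.symm ▸ h2]
  rcases eq_or_lt_of_le (norm_nonneg d) with h0 | h0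
  · rw [← h0]
    have hℓ : 0 ≤ ℓf0 := le_trans (norm_nonneg _) (hfb yα)
    positivity
  · rw [le_div_iff₀ (by positivity)]
    have := key
    nlinarith
end

section
/- Let g : ℝ^p × ℝ^q → ℝ be such that for every x ∈ ℝ^p the function g(x, ·) is differentiable and μ_g-strongly convex (μ_g > 0), and the partial gradient ∇_y g is ℓ_{g,1}-Lipschitz in x uniformly in y, i.e. ‖∇_y g(x, y) − ∇_y g(x′, y)‖ ≤ ℓ_{g,1}·‖x − x′‖ for all x, x′, y. Let z*(x) denote the unique minimizer of g(x, ·). Then z* : ℝ^p → ℝ^q is Lipschitz continuous with constant ℓ_{g,1}/μ_g; in particular, with κ ≥ ℓ_{g,1}/μ_g, z* is κ-Lipschitz. -/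
theorem lower_level_solution_lipschitz (p q : ℕ)
    (g : EuclideanSpace ℝ (Fin p) → EuclideanSpace ℝ (Fin q) → ℝ)
    (μg ℓg1 κ : ℝ) (hμ : 0 < μg)
    (hdiff : ∀ x, Differentiable ℝ (g x))
    (hsc : ∀ (x : EuclideanSpace ℝ (Fin p)) (a b : EuclideanSpace ℝ (Fin q)),
      μg * ‖a - b‖ ^ 2 ≤ (inner ℝ (gradient (g x) a - gradient (g x) b) (a - b) : ℝ))
    (hlipx : ∀ (x x' : EuclideanSpace ℝ (Fin p)) (y : EuclideanSpace ℝ (Fin q)),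
      ‖gradient (g x) y - gradient (g x') y‖ ≤ ℓg1 * ‖x - x'‖)
    (zstar : EuclideanSpace ℝ (Fin p) → EuclideanSpace ℝ (Fin q))
    (hzstar : ∀ x, gradient (g x) (zstar x) = 0)
    (hκ : ℓg1 / μg ≤ κ) :
    ∀ x x', ‖zstar x - zstar x'‖ ≤ ℓg1 / μg * ‖x - x'‖ ∧
      ‖zstar x - zstar x'‖ ≤ κ * ‖x - x'‖ := by
  intro x x'
  set d := ‖zstar x - zstar x'‖ with hd
  set ε := ‖x - x'‖ with hε
  have hd0 : 0 ≤ d := norm_nonneg _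
  have hε0 : 0 ≤ ε := norm_nonneg _
  have key : d ≤ ℓg1 / μg * ε := by
    rcases eq_or_lt_of_le hε0 with hε' | hε'
    · have hxx : x = x' := norm_sub_eq_zero_iff.mp hε'.symm
      subst hxx
      simp [hd, hε]
    · have hℓ0 : 0 ≤ ℓg1 := by
        have h := hlipx x x' (zstar x)
        have h0 : (0:ℝ) ≤ ℓg1 * ε := le_trans (norm_nonneg _) h
        exact nonneg_of_mul_nonneg_right (by linarith [mul_comm ℓg1 ε]) hε'
      have h1 : μg * d ^ 2 ≤ ℓg1 * ε * d := by
        have h2 := hsc x (zstar x) (zstar x')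
        rw [hzstar x] at h2
        have h3 : (inner ℝ (0 - gradient (g x) (zstar x')) (zstar x - zstar x') : ℝ)
            ≤ ‖(0:EuclideanSpace ℝ (Fin q)) - gradient (g x) (zstar x')‖ * d :=
          real_inner_le_norm _ _
        have h4 : ‖(0:EuclideanSpace ℝ (Fin q)) - gradient (g x) (zstar x')‖ ≤ ℓg1 * ε := by
          rw [← hzstar x']
          calc ‖gradient (g x') (zstar x') - gradient (g x) (zstar x')‖
              ≤ ℓg1 * ‖x' - x‖ := hlipx x' x (zstar x')
            _ = ℓg1 * ε := by rw [hε, norm_sub_rev]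
        calc μg * d ^ 2 ≤ ‖(0:EuclideanSpace ℝ (Fin q)) - gradient (g x) (zstar x')‖ * d :=
              le_trans h2 h3
          _ ≤ ℓg1 * ε * d := mul_le_mul_of_nonneg_right h4 hd0
      rcases eq_or_lt_of_le hd0 with hd' | hd'
      · rw [← hd']
        positivity
      · have : μg * d ≤ ℓg1 * ε := by
          have := (mul_le_mul_iff_of_pos_right hd').mpr (le_refl (μg * d))
          nlinarith [h1, hd']
        rw [div_mul_eq_mul_div, le_div_iff₀ hμ]
        linarith
  refine ⟨key, key.trans ?_⟩
  exact mul_le_mul_of_nonneg_right hκ hε0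
end

section
/- Let n ≥ 1, let W ∈ ℝ^{n×n} satisfy W·1_n = 1_n and 1_nᵀ·W = 1_nᵀ, and suppose ‖W − J‖₂ ≤ ρ for some 0 ≤ ρ < 1, where J = (1/n)·1_n·1_nᵀ. Let Θ, U ∈ ℝ^{q×n}, let γ ∈ ℝ, and define the update Θ⁺ = Θ·W − γ·U. Write θ̄ = (1/n)·Θ·1_n, ū = (1/n)·U·1_n, and θ̄⁺ = (1/n)·Θ⁺·1_n = θ̄ − γ·ū. Then ‖Θ⁺ − θ̄⁺·1_nᵀ‖_F² ≤ ((1+ρ²)/2)·‖Θ − θ̄·1_nᵀ‖_F² + ((1+ρ²)/(1−ρ²))·γ²·‖U − ū·1_nᵀ‖_F². -/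
/-- The Frobenius norm of a real matrix. -/
noncomputable def frobeniusNorm {m n : ℕ} (A : Matrix (Fin m) (Fin n) ℝ) : ℝ :=
  Real.sqrt (∑ i, ∑ j, (A i j) ^ 2)

/-- The spectral norm of a real matrix: the operator norm of the induced linear map between
Euclidean spaces. -/
noncomputable def matrixSpectralNorm {m n : ℕ} (A : Matrix (Fin m) (Fin n) ℝ) : ℝ :=
  ‖LinearMap.toContinuousLinearMap (Matrix.toEuclideanLin A)‖

/-- The average of the columns of a matrix: `(1/n) • A • 1ₙ`. -/
noncomputable def colAvg {q n : ℕ} (A : Matrix (Fin q) (Fin n) ℝ) : Fin q → ℝ :=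
  (n : ℝ)⁻¹ • A.mulVec (fun _ => 1)

/-- The consensus error of a matrix of stacked iterates: `A - ā·1ₙᵀ`. -/
noncomputable def consensusErr {q n : ℕ} (A : Matrix (Fin q) (Fin n) ℝ) :
    Matrix (Fin q) (Fin n) ℝ :=
  A - Matrix.vecMulVec (colAvg A) (fun _ => 1)

open scoped Matrix

lemma frobNorm_nonneg {m n : ℕ} (A : Matrix (Fin m) (Fin n) ℝ) : 0 ≤ frobeniusNorm A :=
  Real.sqrt_nonneg _

lemma frobNorm_sq {m n : ℕ} (A : Matrix (Fin m) (Fin n) ℝ) :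
    frobeniusNorm A ^ 2 = ∑ i, ∑ j, (A i j) ^ 2 :=
  Real.sq_sqrt (Finset.sum_nonneg fun i _ => Finset.sum_nonneg fun j _ => sq_nonneg _)

section Frob
attribute [local instance] Matrix.frobeniusNormedAddCommGroup Matrix.frobeniusNormedSpace

lemma frobNorm_eq_norm {m n : ℕ} (A : Matrix (Fin m) (Fin n) ℝ) : frobeniusNorm A = ‖A‖ := by
  rw [Matrix.frobenius_norm_def, frobeniusNorm, Real.sqrt_eq_rpow]
  congr 1
  refine Finset.sum_congr rfl fun i _ => Finset.sum_congr rfl fun j _ => ?_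
  rw [show ((2:ℝ) = ((2:ℕ):ℝ)) by norm_num, Real.rpow_natCast]
  simp [Real.norm_eq_abs, sq_abs]

lemma frobNorm_sub_le {m n : ℕ} (A B : Matrix (Fin m) (Fin n) ℝ) :
    frobeniusNorm (A - B) ≤ frobeniusNorm A + frobeniusNorm B := by
  simp only [frobNorm_eq_norm]; exact norm_sub_le A B

lemma frobNorm_smul {m n : ℕ} (γ : ℝ) (A : Matrix (Fin m) (Fin n) ℝ) :
    frobeniusNorm (γ • A) = |γ| * frobeniusNorm A := by
  simp only [frobNorm_eq_norm]; rw [norm_smul]; simp [Real.norm_eq_abs]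
end Frob

section Spec
open scoped Matrix.Norms.L2Operator

lemma spectral_eq_norm {m n : ℕ} (A : Matrix (Fin m) (Fin n) ℝ) : matrixSpectralNorm A = ‖A‖ := rfl

lemma spectral_nonneg {m n : ℕ} (A : Matrix (Fin m) (Fin n) ℝ) : 0 ≤ matrixSpectralNorm A := by
  rw [spectral_eq_norm]; exact norm_nonneg _

lemma spectral_transpose {m n : ℕ} (A : Matrix (Fin m) (Fin n) ℝ) :
    matrixSpectralNorm Aᵀ = matrixSpectralNorm A := by
  rw [spectral_eq_norm, spectral_eq_norm, ← Matrix.l2_opNorm_conjTranspose A]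
  congr 1

lemma euclid_sq {k : ℕ} (v : Fin k → ℝ) :
    ‖(EuclideanSpace.equiv (Fin k) ℝ).symm v‖ ^ 2 = ∑ j, v j ^ 2 := by
  rw [EuclideanSpace.norm_eq, Real.sq_sqrt (by positivity)]
  refine Finset.sum_congr rfl fun j _ => ?_
  simp [Real.norm_eq_abs, sq_abs]

lemma frob_mul_spectral {q n l : ℕ} (A : Matrix (Fin q) (Fin n) ℝ)
    (B : Matrix (Fin n) (Fin l) ℝ) :
    frobeniusNorm (A * B) ≤ frobeniusNorm A * matrixSpectralNorm B := by
  have hrow : ∀ i, ∑ j, ((A * B) i j) ^ 2 ≤ (∑ k, (A i k) ^ 2) * matrixSpectralNorm B ^ 2 := by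
    intro i
    have hle := Matrix.l2_opNorm_mulVec Bᵀ ((EuclideanSpace.equiv (Fin n) ℝ).symm (A i))
    rw [← spectral_eq_norm, spectral_transpose] at hle
    calc ∑ j, ((A * B) i j) ^ 2
        = ‖(EuclideanSpace.equiv (Fin l) ℝ).symm (Bᵀ.mulVec ((EuclideanSpace.equiv (Fin n) ℝ).symm (A i)))‖ ^ 2 := by
          rw [euclid_sq]
          refine Finset.sum_congr rfl fun j _ => ?_
          congr 1
          simp [Matrix.mulVec, Matrix.mul_apply, dotProduct, mul_comm]
      _ ≤ (matrixSpectralNorm B * ‖(EuclideanSpace.equiv (Fin n) ℝ).symm (A i)‖) ^ 2 := by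
          apply pow_le_pow_left₀ (norm_nonneg _) hle
      _ = (∑ k, (A i k) ^ 2) * matrixSpectralNorm B ^ 2 := by
          rw [mul_pow, euclid_sq]; ring
  have hsum : ∑ i, ∑ j, ((A * B) i j) ^ 2 ≤ (frobeniusNorm A * matrixSpectralNorm B) ^ 2 := by
    rw [mul_pow, frobNorm_sq, Finset.sum_mul]
    exact Finset.sum_le_sum fun i _ => hrow i
  have h := Real.sqrt_le_sqrt hsum
  rwa [Real.sqrt_sq (mul_nonneg (frobNorm_nonneg A) (spectral_nonneg B))] at h
end Spec

lemma consensusErr_eq {q n : ℕ} (A : Matrix (Fin q) (Fin n) ℝ) :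
    consensusErr A = A - A * (Matrix.of (fun _ _ => (1 : ℝ) / n) : Matrix (Fin n) (Fin n) ℝ) := by
  unfold consensusErr
  congr 1
  ext i j
  simp only [Matrix.vecMulVec_apply, colAvg, Pi.smul_apply, Matrix.mulVec, dotProduct,
    smul_eq_mul, mul_one, Matrix.mul_apply, Matrix.of_apply]
  rw [Finset.mul_sum]
  exact Finset.sum_congr rfl fun k _ => by ring

lemma consensus_key {n q : ℕ} (hn : 0 < n) (W : Matrix (Fin n) (Fin n) ℝ)
    (hWr : W.mulVec (fun _ => 1) = fun _ => 1)
    (hWc : Matrix.vecMul (fun _ => 1) W = fun _ => 1)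
    (Θ U : Matrix (Fin q) (Fin n) ℝ) (γ : ℝ) :
    consensusErr (Θ * W - γ • U) =
      consensusErr Θ * (W - Matrix.of fun _ _ => (1 : ℝ) / n) - γ • consensusErr U := by
  have hn' : (n : ℝ) ≠ 0 := Nat.cast_ne_zero.mpr hn.ne'
  set J : Matrix (Fin n) (Fin n) ℝ := Matrix.of fun _ _ => (1 : ℝ) / n with hJ
  have hWJ : W * J = J := by
    ext i j
    have h1 : ∑ k, W i k = 1 := by
      have := congrFun hWr i
      simpa [Matrix.mulVec, dotProduct] using this
    simp only [Matrix.mul_apply, hJ, Matrix.of_apply]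
    rw [← Finset.sum_mul, h1, one_mul]
  have hJW : J * W = J := by
    ext i j
    have h1 : ∑ k, W k j = 1 := by
      have := congrFun hWc j
      simpa [Matrix.vecMul, dotProduct] using this
    simp only [Matrix.mul_apply, hJ, Matrix.of_apply]
    rw [← Finset.mul_sum, h1, mul_one]
  have hJJ : J * J = J := by
    ext i j
    simp only [Matrix.mul_apply, hJ, Matrix.of_apply, Finset.sum_const, Finset.card_univ,
      Fintype.card_fin, nsmul_eq_mul]
    field_simp
  have e1 : Θ * W * J = Θ * J := by rw [Matrix.mul_assoc, hWJ]
  have e2 : Θ * J * W = Θ * J := by rw [Matrix.mul_assoc, hJW]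
  have e3 : Θ * J * J = Θ * J := by rw [Matrix.mul_assoc, hJJ]
  rw [consensusErr_eq (Θ * W - γ • U), consensusErr_eq Θ, consensusErr_eq U, ← hJ]
  rw [Matrix.sub_mul, Matrix.smul_mul, Matrix.mul_sub, Matrix.sub_mul, Matrix.sub_mul,
    e1, e2, e3, smul_sub]
  abel

theorem iterate_consensus_contraction (n q : ℕ) (hn : 0 < n)
    (W : Matrix (Fin n) (Fin n) ℝ)
    (hWr : W.mulVec (fun _ => 1) = fun _ => 1)
    (hWc : Matrix.vecMul (fun _ => 1) W = fun _ => 1)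
    (ρ : ℝ) (hρ0 : 0 ≤ ρ) (hρ1 : ρ < 1)
    (hWρ : matrixSpectralNorm (W - Matrix.of fun _ _ => (1 : ℝ) / n) ≤ ρ)
    (Θ U : Matrix (Fin q) (Fin n) ℝ) (γ : ℝ) :
    frobeniusNorm (consensusErr (Θ * W - γ • U)) ^ 2 ≤
      (1 + ρ ^ 2) / 2 * frobeniusNorm (consensusErr Θ) ^ 2 +
        (1 + ρ ^ 2) / (1 - ρ ^ 2) * γ ^ 2 * frobeniusNorm (consensusErr U) ^ 2 := by
  rw [consensus_key hn W hWr hWc Θ U γ]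
  set J : Matrix (Fin n) (Fin n) ℝ := Matrix.of fun _ _ => (1 : ℝ) / n with hJ
  set a := frobeniusNorm (consensusErr Θ) with ha'
  set b := frobeniusNorm (consensusErr U) with hb'
  have ha : 0 ≤ a := frobNorm_nonneg _
  have hb : 0 ≤ b := frobNorm_nonneg _
  set c := |γ| * b with hc'
  have h1 : frobeniusNorm (consensusErr Θ * (W - J) - γ • consensusErr U) ≤ ρ * a + c := by
    refine le_trans (frobNorm_sub_le _ _) (add_le_add ?_ ?_)
    · calc frobeniusNorm (consensusErr Θ * (W - J)) ≤ a * matrixSpectralNorm (W - J) :=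
            frob_mul_spectral _ _
        _ ≤ a * ρ := mul_le_mul_of_nonneg_left hWρ ha
        _ = ρ * a := mul_comm _ _
    · rw [frobNorm_smul]
  have h2 : frobeniusNorm (consensusErr Θ * (W - J) - γ • consensusErr U) ^ 2 ≤ (ρ * a + c) ^ 2 :=
    pow_le_pow_left₀ (frobNorm_nonneg _) h1 2
  have h1ρ : 0 < 1 - ρ ^ 2 := by nlinarith
  have key2 : (1 + ρ ^ 2) / 2 * a ^ 2 + (1 + ρ ^ 2) / (1 - ρ ^ 2) * c ^ 2 - (ρ * a + c) ^ 2 =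
      ((1 - ρ ^ 2) * a - 2 * ρ * c) ^ 2 / (2 * (1 - ρ ^ 2)) := by
    field_simp
    ring
  have h3 : 0 ≤ ((1 - ρ ^ 2) * a - 2 * ρ * c) ^ 2 / (2 * (1 - ρ ^ 2)) := by positivity
  have h4 : (1 + ρ ^ 2) / (1 - ρ ^ 2) * c ^ 2 = (1 + ρ ^ 2) / (1 - ρ ^ 2) * γ ^ 2 * b ^ 2 := by
    rw [hc', mul_pow, sq_abs]; ring
  linarith [key2 ▸ h3]
end

section
/- Fix x and constants ℓ_{f,0}, ℓ_{g,1}, μ_g > 0 and α > 0. Let g : ℝ^q → ℝ be differentiable, μ_g-strongly convex, with ℓ_{g,1}-Lipschitz gradient, and let y* be its minimizer (∇g(y*) = 0). Let f : ℝ^q → ℝ be differentiable with ‖∇f(y)‖ ≤ ℓ_{f,0} for all y (so f is ℓ_{f,0}-Lipschitz), and let y_α satisfy ∇f(y_α) + α·∇g(y_α) = 0. Define the penalized value Γ = f(y_α) + α·(g(y_α) − g(y*)) and the bilevel value Φ = f(y*). Then |Γ − Φ| ≤ ℓ_{f,0}²/(μ_g·α) + ℓ_{g,1}·ℓ_{f,0}²/(2·μ_g²·α).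 -/
open InnerProductSpace intervalIntegral

section aux
variable {q : ℕ}

lemma path_cont (ystar d : EuclideanSpace ℝ (Fin q)) :
    Continuous fun t : ℝ => ystar + t • d :=
  continuous_const.add (continuous_id.smul continuous_const)

lemma path_hasDerivAt (g : EuclideanSpace ℝ (Fin q) → ℝ) (hg : Differentiable ℝ g)
    (y0 d : EuclideanSpace ℝ (Fin q)) (t : ℝ) :
    HasDerivAt (fun s : ℝ => g (y0 + s • d))
      ((inner ℝ (gradient g (y0 + t • d)) d : ℝ)) t := by
  have hc : HasDerivAt (fun s : ℝ => y0 + s • d) d t := by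
    simpa using ((hasDerivAt_id t).smul_const d).const_add y0
  have hF : HasFDerivAt g (toDual ℝ _ (gradient g (y0 + t • d))) (y0 + t • d) :=
    ((hg _).hasGradientAt).hasFDerivAt
  have := hF.comp_hasDerivAt t hc
  simp only [toDual_apply_apply] at this
  exact this

lemma integrand_cont (g : EuclideanSpace ℝ (Fin q) → ℝ) (hgc : Continuous (gradient g))
    (y0 d : EuclideanSpace ℝ (Fin q)) :
    Continuous fun t : ℝ => (inner ℝ (gradient g (y0 + t • d)) d : ℝ) :=
  (hgc.comp (path_cont y0 d)).inner continuous_const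

lemma seg_integral (g : EuclideanSpace ℝ (Fin q) → ℝ) (hg : Differentiable ℝ g)
    (hgc : Continuous (gradient g)) (y0 d : EuclideanSpace ℝ (Fin q)) :
    (∫ t in (0:ℝ)..1, (inner ℝ (gradient g (y0 + t • d)) d : ℝ)) = g (y0 + d) - g y0 := by
  have := integral_eq_sub_of_hasDerivAt (f := fun s : ℝ => g (y0 + s • d))
    (f' := fun t : ℝ => (inner ℝ (gradient g (y0 + t • d)) d : ℝ))
    (fun t _ => path_hasDerivAt g hg y0 d t)
    ((integrand_cont g hgc y0 d).intervalIntegrable 0 1)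
  simpa using this

lemma grad_continuous (g : EuclideanSpace ℝ (Fin q) → ℝ) {ℓ : ℝ} (hℓ : 0 < ℓ)
    (hlip : ∀ a b : EuclideanSpace ℝ (Fin q),
      ‖gradient g a - gradient g b‖ ≤ ℓ * ‖a - b‖) : Continuous (gradient g) := by
  have : LipschitzWith ℓ.toNNReal (gradient g) := by
    apply LipschitzWith.of_dist_le_mul
    intro a b
    simpa [dist_eq_norm, Real.coe_toNNReal _ hℓ.le] using hlip a b
  exact this.continuous

end aux

theorem penalty_value_gap_bound (q : ℕ)
    (f g : EuclideanSpace ℝ (Fin q) → ℝ) (ℓf0 ℓg1 μg α : ℝ)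
    (hℓf0 : 0 < ℓf0) (hℓg1 : 0 < ℓg1) (hμ : 0 < μg) (hα : 0 < α)
    (hgdiff : Differentiable ℝ g)
    (hsc : ∀ a b : EuclideanSpace ℝ (Fin q),
      μg * ‖a - b‖ ^ 2 ≤ (inner ℝ (gradient g a - gradient g b) (a - b) : ℝ))
    (hglip : ∀ a b : EuclideanSpace ℝ (Fin q),
      ‖gradient g a - gradient g b‖ ≤ ℓg1 * ‖a - b‖)
    (ystar : EuclideanSpace ℝ (Fin q)) (hystar : gradient g ystar = 0)
    (hfdiff : Differentiable ℝ f)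
    (hfb : ∀ y, ‖gradient f y‖ ≤ ℓf0)
    (yα : EuclideanSpace ℝ (Fin q))
    (hyα : gradient f yα + α • gradient g yα = 0) :
    |(f yα + α * (g yα - g ystar)) - f ystar| ≤
      ℓf0 ^ 2 / (μg * α) + ℓg1 * ℓf0 ^ 2 / (2 * μg ^ 2 * α) := by
  set d : EuclideanSpace ℝ (Fin q) := yα - ystar with hd
  -- bound on ‖∇g yα‖
  have hαg : α * ‖gradient g yα‖ ≤ ℓf0 := by
    have h1 : α • gradient g yα = - gradient f yα := by
      rw [eq_neg_iff_add_eq_zero, add_comm]; exact hyα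
    calc α * ‖gradient g yα‖ = ‖α • gradient g yα‖ := by
          rw [norm_smul, Real.norm_eq_abs, abs_of_pos hα]
      _ = ‖gradient f yα‖ := by rw [h1, norm_neg]
      _ ≤ ℓf0 := hfb yα
  -- bound on ‖d‖
  have hdb : ‖d‖ ≤ ℓf0 / (μg * α) := by
    have h1 := hsc yα ystar
    rw [hystar, sub_zero] at h1
    have h2 : (inner ℝ (gradient g yα) (yα - ystar) : ℝ) ≤ ‖gradient g yα‖ * ‖d‖ :=
      real_inner_le_norm _ _
    have h3 : μg * ‖d‖ ^ 2 ≤ ‖gradient g yα‖ * ‖d‖ := by rw [hd]; exact h1.trans h2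
    rw [le_div_iff₀ (by positivity)]
    rcases eq_or_lt_of_le (norm_nonneg d) with h0 | h0
    · rw [← h0]; simpa using hℓf0.le
    · nlinarith [mul_le_mul_of_nonneg_left h3 hα.le,
        mul_le_mul_of_nonneg_right hαg (norm_nonneg d)]
  have hgc : Continuous (gradient g) := grad_continuous g hℓg1 hglip
  have hseg := seg_integral g hgdiff hgc ystar d
  rw [show ystar + d = yα by rw [hd]; abel] at hseg
  -- descent lemma: g yα - g ystar ≤ ℓg1/2 * ‖d‖^2
  have hub : g yα - g ystar ≤ ℓg1 / 2 * ‖d‖ ^ 2 := by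
    rw [← hseg]
    have hmono : (∫ t in (0:ℝ)..1, (inner ℝ (gradient g (ystar + t • d)) d : ℝ))
        ≤ ∫ t in (0:ℝ)..1, ℓg1 * ‖d‖ ^ 2 * t := by
      apply integral_mono_on (by norm_num)
      · exact (integrand_cont g hgc ystar d).intervalIntegrable 0 1
      · exact (continuous_const.mul continuous_id).intervalIntegrable 0 1
      · intro t ht
        have h1 : (inner ℝ (gradient g (ystar + t • d)) d : ℝ)
            = (inner ℝ (gradient g (ystar + t • d) - gradient g ystar) d : ℝ) := by
          rw [hystar]; simp
        rw [h1]
        calc (inner ℝ (gradient g (ystar + t • d) - gradient g ystar) d : ℝ)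
            ≤ ‖gradient g (ystar + t • d) - gradient g ystar‖ * ‖d‖ := real_inner_le_norm _ _
          _ ≤ ℓg1 * ‖(ystar + t • d) - ystar‖ * ‖d‖ :=
              mul_le_mul_of_nonneg_right (hglip _ _) (norm_nonneg d)
          _ = ℓg1 * ‖d‖ ^ 2 * t := by
              rw [add_sub_cancel_left, norm_smul, Real.norm_eq_abs, abs_of_nonneg ht.1]
              ring
    calc (∫ t in (0:ℝ)..1, (inner ℝ (gradient g (ystar + t • d)) d : ℝ))
        ≤ ∫ t in (0:ℝ)..1, ℓg1 * ‖d‖ ^ 2 * t := hmono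
      _ = ℓg1 / 2 * ‖d‖ ^ 2 := by
          rw [intervalIntegral.integral_const_mul, integral_id]; ring
  -- lower bound: g ystar ≤ g yα
  have hlb : 0 ≤ g yα - g ystar := by
    rw [← hseg]
    apply intervalIntegral.integral_nonneg (by norm_num)
    intro t ht
    rcases eq_or_lt_of_le ht.1 with h | h
    · rw [← h]; simp [hystar]
    · have h1 := hsc (ystar + t • d) ystar
      rw [hystar, sub_zero, add_sub_cancel_left] at h1
      have h2 : (inner ℝ (gradient g (ystar + t • d)) (t • d) : ℝ)
          = t * (inner ℝ (gradient g (ystar + t • d)) d : ℝ) := real_inner_smul_right _ _ _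
      rw [h2] at h1
      have h3 : (0:ℝ) ≤ μg * ‖t • d‖ ^ 2 := by positivity
      nlinarith
  -- f Lipschitz
  have hflip : |f yα - f ystar| ≤ ℓf0 * ‖d‖ := by
    have hb : ∀ x ∈ (Set.univ : Set (EuclideanSpace ℝ (Fin q))), ‖fderiv ℝ f x‖ ≤ ℓf0 := by
      intro x _
      have : fderiv ℝ f x = toDual ℝ _ (gradient f x) :=
        ((hfdiff x).hasGradientAt).hasFDerivAt.fderiv
      rw [this, LinearIsometryEquiv.norm_map]
      exact hfb x
    have := convex_univ.norm_image_sub_le_of_norm_fderiv_le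
      (fun x _ => hfdiff x) hb (Set.mem_univ ystar) (Set.mem_univ yα)
    rw [Real.norm_eq_abs] at this
    simpa [hd] using this
  -- combine
  have h1 : |f yα - f ystar| ≤ ℓf0 ^ 2 / (μg * α) := by
    calc |f yα - f ystar| ≤ ℓf0 * ‖d‖ := hflip
      _ ≤ ℓf0 * (ℓf0 / (μg * α)) := mul_le_mul_of_nonneg_left hdb hℓf0.le
      _ = ℓf0 ^ 2 / (μg * α) := by ring
  have h2 : α * (g yα - g ystar) ≤ ℓg1 * ℓf0 ^ 2 / (2 * μg ^ 2 * α) := by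
    have hd2 : ‖d‖ ^ 2 ≤ (ℓf0 / (μg * α)) ^ 2 := pow_le_pow_left₀ (norm_nonneg d) hdb 2
    calc α * (g yα - g ystar) ≤ α * (ℓg1 / 2 * ‖d‖ ^ 2) :=
          mul_le_mul_of_nonneg_left hub hα.le
      _ ≤ α * (ℓg1 / 2 * (ℓf0 / (μg * α)) ^ 2) := by
          apply mul_le_mul_of_nonneg_left _ hα.le
          exact mul_le_mul_of_nonneg_left hd2 (by positivity)
      _ = ℓg1 * ℓf0 ^ 2 / (2 * μg ^ 2 * α) := by field_simp
  have h3 : 0 ≤ α * (g yα - g ystar) := by positivity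
  rw [abs_le] at h1 ⊢
  constructor <;> nlinarith [h1.1, h1.2]
end
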